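/- arXiv:2407.07029 — 2 statements merged into one kernel-verified Lean document; each statement's English description precedes it below -/
import Mathlib

section
/- Let α = a₁⋯aₙ be an asymmetric bracelet over {0,…,k−1}, with ℓ the index of the second-last symbol not equal to k−1 and j the index of the last such symbol. If aₙ = k−1, a_j = k−2, and the prefix a₁⋯a_ℓ is a palindrome, then lastNonMax(α) = a₁⋯a_ℓ(k−1)^{n−ℓ} is a symmetric bracelet. -/
/-- `β` is a rotation of `α`. -/
def IsRotationOf (β α : List ℕ) : Prop := ∃ i, β = α.rotate i

/-- A necklace: lexicographically smallest among its rotations. -/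
def IsNecklace (α : List ℕ) : Prop := ∀ i, α ≤ α.rotate i

/-- A bracelet: lexicographically smallest among all rotations of itself and of its reversal. -/
def IsBracelet (α : List ℕ) : Prop :=
  (∀ i, α ≤ α.rotate i) ∧ (∀ i, α ≤ α.reverse.rotate i)

/-- Symmetric: the reversal lies in the same rotation class. -/
def IsSymmetric (α : List ℕ) : Prop := IsRotationOf α.reverse α

/-- Asymmetric bracelet. -/
def IsAsymBracelet (α : List ℕ) : Prop := IsBracelet α ∧ ¬ IsSymmetric α


private lemma getD_rotate (l : List ℕ) (i e n : ℕ) (hn : l.length = n) (he : e < n) :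
    (l.rotate i).getD e 0 = l.getD ((e + i) % n) 0 := by
  subst hn
  rw [List.getD_eq_getElem _ _ (by simpa using he), List.getElem_rotate,
    List.getD_eq_getElem _ _ (Nat.mod_lt _ (by omega))]

private lemma getD_set_ne (l : List ℕ) (L c e : ℕ) (h : e ≠ L) :
    (l.set L c).getD e 0 = l.getD e 0 := by
  rcases lt_or_ge e l.length with hlt | hle
  · rw [List.getD_eq_getElem _ _ (by simpa using hlt), List.getD_eq_getElem _ _ hlt]
    exact List.getElem_set_ne (fun hc => h hc.symm) _
  · rw [List.getD_eq_default _ _ (by simpa using hle), List.getD_eq_default _ _ hle]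

private lemma getD_set_eq (l : List ℕ) (L c : ℕ) (h : L < l.length) :
    (l.set L c).getD L 0 = c := by
  rw [List.getD_eq_getElem _ _ (by simpa using h)]
  exact List.getElem_set_self _

private lemma lt_of_firstdiff : ∀ (d : ℕ) (x y : List ℕ), x.length = y.length →
    d < x.length → (∀ e, e < d → x.getD e 0 = y.getD e 0) →
    x.getD d 0 < y.getD d 0 → x < y
  | _, [], _, _, hd, _, _ => absurd hd (by simp)
  | _, _ :: _, [], hlen, _, _, _ => by simp at hlen
  | 0, a :: x, b :: y, _, _, _, hlt => List.Lex.rel (by simpa using hlt)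
  | (d+1), a :: x, b :: y, hlen, hd, hpre, hlt => by
    have hab : a = b := by simpa using hpre 0 (by omega)
    subst hab
    exact List.Lex.cons (lt_of_firstdiff d x y (by simpa using hlen) (by simpa using hd)
      (fun e he => by simpa using hpre (e+1) (by omega)) (by simpa using hlt))

private lemma firstdiff_of_lt (x y : List ℕ) (h : x < y) : x.length = y.length →
    ∃ d, d < x.length ∧ (∀ e, e < d → x.getD e 0 = y.getD e 0) ∧
      x.getD d 0 < y.getD d 0 := by
  have h' : List.Lex (· < ·) x y := h
  clear h
  induction h' with
  | nil => intro hlen; simp at hlen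
  | @rel a l₁ b l₂ hab =>
    exact fun _ => ⟨0, by simp, fun e he => by omega, by simpa using hab⟩
  | @cons a l₁ l₂ h ih =>
    intro hlen
    obtain ⟨d, hd, hpre, hlt⟩ := ih (by simpa using hlen)
    refine ⟨d + 1, by simpa using hd, fun e he => ?_, by simpa using hlt⟩
    cases e with
    | zero => simp
    | succ e => simpa using hpre e (by omega)

/-- Raising the letter at position `L` of a necklace to `c > α[L]` yields a necklace,
provided `0 < L` and every letter strictly after position `L` exceeds `α[0]`. -/
private lemma necklace_set (α : List ℕ) (L c : ℕ) (hL : L < α.length) (hL0 : 0 < L)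
    (hnk : ∀ j, α ≤ α.rotate j)
    (hc : α.getD L 0 < c)
    (h0 : ∀ e, L < e → e < α.length → α.getD 0 0 < α.getD e 0) :
    ∀ i, (α.set L c) ≤ (α.set L c).rotate i := by
  intro i
  have hn0 : 0 < α.length := by omega
  have hlenβ : (α.set L c).length = α.length := by simp
  rw [← List.rotate_mod, hlenβ]
  set i' := i % α.length with hi'def
  have hi'lt : i' < α.length := Nat.mod_lt _ hn0
  have hβne : ∀ e, e ≠ L → (α.set L c).getD e 0 = α.getD e 0 :=
    fun e he => getD_set_ne α L c e he
  have hβL : (α.set L c).getD L 0 = c := getD_set_eq α L c hL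
  have hrotβ : ∀ e, e < α.length →
      ((α.set L c).rotate i').getD e 0 = (α.set L c).getD ((e + i') % α.length) 0 :=
    fun e he => getD_rotate _ _ _ _ hlenβ he
  have hrota : ∀ e, e < α.length →
      (α.rotate i').getD e 0 = α.getD ((e + i') % α.length) 0 :=
    fun e he => getD_rotate _ _ _ _ rfl he
  rcases Nat.eq_zero_or_pos i' with hz | hpos
  · rw [hz, List.rotate_zero]
  rcases lt_or_ge L i' with hgt | hle
  · -- rotation starts strictly after position L : strict at position 0
    apply le_of_lt
    apply lt_of_firstdiff 0 _ _ (by simp) (by simpa using hn0)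
      (fun e he => absurd he (by omega))
    rw [hrotβ 0 hn0]
    have h1 : (0 + i') % α.length = i' := by
      rw [Nat.zero_add, Nat.mod_eq_of_lt hi'lt]
    rw [h1, hβne 0 (by omega), hβne i' (by omega)]
    exact h0 i' hgt hi'lt
  · -- 0 < i' ≤ L
    have hj1 : ((L - i') + i') % α.length = L := by
      rw [show (L - i') + i' = L by omega, Nat.mod_eq_of_lt hL]
    have hrotβj₀ : ((α.set L c).rotate i').getD (L - i') 0 = c := by
      rw [hrotβ (L - i') (by omega), hj1, hβL]
    have hrotaj₀ : (α.rotate i').getD (L - i') 0 = α.getD L 0 := by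
      rw [hrota (L - i') (by omega), hj1]
    have hpreβ : ∀ e, e < L - i' → α.getD e 0 = (α.rotate i').getD e 0 →
        (α.set L c).getD e 0 = ((α.set L c).rotate i').getD e 0 := by
      intro e he hae
      have hm : (e + i') % α.length = e + i' := Nat.mod_eq_of_lt (by omega)
      rw [hrotβ e (by omega), hm, hβne e (by omega), hβne (e + i') (by omega)]
      rw [hae, hrota e (by omega), hm]
    rcases (hnk i').lt_or_eq with hlt | heq
    · obtain ⟨d, hd, hpre, hdlt⟩ := firstdiff_of_lt _ _ hlt (by simp)
      rcases lt_trichotomy d (L - i') with hdj | hdj | hdj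
      · -- strict at d
        apply le_of_lt
        apply lt_of_firstdiff d _ _ (by simp) (by simpa using hd.trans_le (by omega))
          (fun e he => hpreβ e (by omega) (hpre e he))
        have hm : (d + i') % α.length = d + i' := Nat.mod_eq_of_lt (by omega)
        rw [hβne d (by omega), hrotβ d (by omega), hm, hβne (d + i') (by omega)]
        have h2 := hdlt
        rwa [hrota d (by omega), hm] at h2
      · -- d = L - i' : strict at L - i'
        rw [hdj] at hdlt hpre
        apply le_of_lt
        apply lt_of_firstdiff (L - i') _ _ (by simp) (by simp; omega)
          (fun e he => hpreβ e (by omega) (hpre e he))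
        rw [hβne (L - i') (by omega), hrotβj₀]
        have h2 : α.getD (L - i') 0 < α.getD L 0 := by rw [← hrotaj₀]; exact hdlt
        omega
      · -- L - i' < d : strict at L - i'
        apply le_of_lt
        apply lt_of_firstdiff (L - i') _ _ (by simp) (by simp; omega)
          (fun e he => hpreβ e he (hpre e (by omega)))
        rw [hβne (L - i') (by omega), hrotβj₀]
        have h2 : α.getD (L - i') 0 = α.getD L 0 := by
          rw [← hrotaj₀]; exact hpre (L - i') hdj
        omega
    · -- α = α.rotate i'
      apply le_of_lt
      apply lt_of_firstdiff (L - i') _ _ (by simp) (by simp; omega)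
        (fun e he => hpreβ e he (by rw [← heq]))
      rw [hβne (L - i') (by omega), hrotβj₀]
      have h2 : α.getD (L - i') 0 = α.getD L 0 := by rw [← hrotaj₀, ← heq]
      omega

/-- The exceptional case: if `α = π ++ (k-1)^p ++ (k-2) :: (k-1)^m` with `m ≥ 1`
(last symbol is `k-1`, last non-(k-1) symbol is `k-2`) is an asymmetric
bracelet and the prefix `π` (ending at the second-last non-(k-1) symbol) is a
palindrome, then `lastNonMax α = π ++ (k-1)^(p+1+m)` is a symmetric bracelet. -/
theorem lastNonMax_symmetric (k : ℕ) (π : List ℕ) (p m : ℕ)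
    (hm : 1 ≤ m)
    (hπ : π ≠ []) (hπlast : π.getLast? ≠ some (k - 1))
    (hmem : ∀ x ∈ π, x < k)
    (hpal : π.Palindrome)
    (hb : IsAsymBracelet
      (π ++ List.replicate p (k - 1) ++ (k - 2) :: List.replicate m (k - 1))) :
    IsBracelet (π ++ List.replicate (p + 1 + m) (k - 1)) ∧
      IsSymmetric (π ++ List.replicate (p + 1 + m) (k - 1)) := by
  have hx := List.getLast?_eq_getLast hπ
  have hxne : π.getLast hπ ≠ k - 1 := fun h => hπlast (by rw [hx, h])
  have hxk : π.getLast hπ < k := hmem _ (List.getLast_mem hπ)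
  have hk2 : 2 ≤ k := by omega
  have hπlen : 0 < π.length := List.length_pos_iff.mpr hπ
  have hrev0 : π.reverse.getD 0 0 = π.getLast hπ := by
    rw [List.getD_eq_getElem _ _ (by simpa using hπlen), List.getElem_reverse,
      List.getLast_eq_getElem hπ]
    simp only [Nat.sub_zero]
  have hx0 : π.getD 0 0 = π.getLast hπ := by rw [← hrev0, hpal.reverse_eq]
  set A := π ++ List.replicate p (k - 1) ++ (k - 2) :: List.replicate m (k - 1) with hAdef
  set L := π.length + p with hLdef
  have hAlen : A.length = π.length + p + 1 + m := by
    simp only [hAdef, List.length_append, List.length_cons, List.length_replicate]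
    omega
  have hlen2 : (π ++ List.replicate p (k - 1)).length = L := by
    simp only [List.length_append, List.length_replicate, hLdef]
  -- setting position L to (k-1) gives the candidate word
  have hsetB : A.set L (k - 1) = π ++ List.replicate (p + 1 + m) (k - 1) := by
    rw [hAdef, List.set_append_right _ _ hlen2.le, hlen2, Nat.sub_self,
      List.set_cons_zero, List.append_assoc]
    congr 1
    rw [show p + 1 + m = p + (1 + m) by omega, List.replicate_add,
      show 1 + m = m + 1 by omega, List.replicate_succ]
  have hAL : A.getD L 0 = k - 2 := by
    rw [hAdef, List.getD_append_right _ _ _ _ hlen2.le, hlen2, Nat.sub_self,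
      List.getD_cons_zero]
  have hAe : ∀ e, L < e → e < A.length → A.getD e 0 = k - 1 := by
    intro e h1 h2
    rw [hAdef, List.getD_append_right _ _ _ _ (by omega : (π ++ List.replicate p (k-1)).length ≤ e)]
    rw [hlen2, show e - L = (e - L - 1) + 1 by omega, List.getD_cons_succ]
    rw [List.getD_eq_getElem _ _ (by simp only [List.length_replicate]; omega),
      List.getElem_replicate]
  have hA0 : A.getD 0 0 = π.getD 0 0 := by
    rw [hAdef, List.getD_append _ _ _ _ (by simp only [List.length_append]; omega),
      List.getD_append _ _ _ _ hπlen]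
  have hneckB : ∀ i, (π ++ List.replicate (p + 1 + m) (k - 1)) ≤
      (π ++ List.replicate (p + 1 + m) (k - 1)).rotate i := by
    rw [← hsetB]
    exact necklace_set A L (k - 1) (by omega) (by omega) hb.1.1
      (by rw [hAL]; omega)
      (fun e h1 h2 => by rw [hA0, hAe e h1 h2, hx0]; omega)
  have hrevB : (π ++ List.replicate (p + 1 + m) (k - 1)).reverse =
      (π ++ List.replicate (p + 1 + m) (k - 1)).rotate π.length := by
    rw [List.reverse_append, List.reverse_replicate, hpal.reverse_eq,
      List.rotate_append_length_eq]
  refine ⟨⟨hneckB, fun i => ?_⟩, ⟨π.length, hrevB⟩⟩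
  rw [hrevB, List.rotate_rotate]
  exact hneckB _
end

section
/- For even k ≥ 4, the concatenation U_k = τ₄τ₆⋯τ_k, where τ₄ = 0213 and for even m ≥ 6, τ_m is the word of length 2m−4 whose odd-indexed positions read 0,1,…,m−3 and whose even-indexed positions read ((m−2)(m−1))^{m/2−1}, is a cyclic orientable sequence of order 2 over {0,…,k−1} of length k(k−2)/2. -/
/-- The cyclic window of length `n` starting at position `i` of `s`. -/
def cycWindow (s : List ℕ) (n i : ℕ) : List ℕ := (s.rotate i).take n

/-- `s` is a (cyclic) orientable sequence of order `n` over `{0,…,k-1}`: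
all symbols lie in the alphabet, the sequence is long enough to have
length-`n` windows, all cyclic length-`n` windows are pairwise distinct, and
no window is the reversal of a window (in particular no palindromic window). -/
def IsOrientableSeq (k n : ℕ) (s : List ℕ) : Prop :=
  (∀ x ∈ s, x < k) ∧ n ≤ s.length ∧
  (∀ i < s.length, ∀ j < s.length, i ≠ j → cycWindow s n i ≠ cycWindow s n j) ∧
  (∀ i < s.length, ∀ j < s.length, cycWindow s n i ≠ (cycWindow s n j).reverse)

/-- For even `m`, the building block `τ_m` of length `2m-4`: its odd-indexed
positions read `0,1,…,m-3` and its even-indexed positions read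
`((m-2)(m-1))^(m/2-1)`.  E.g. `τ₄ = 0213`, `τ₆ = 04152435`. -/
def tauOS (m : ℕ) : List ℕ :=
  (List.ofFn (fun i : Fin (m - 2) =>
    [i.val, if i.val % 2 = 0 then m - 2 else m - 1])).flatten

/-- `U_k = τ₄τ₆⋯τ_k` for even `k`. -/
def Ueven (k : ℕ) : List ℕ :=
  ((List.range ((k - 2) / 2)).map (fun t => tauOS (2 * t + 4))).flatten

def blkOS (p : ℕ) : ℕ := (Nat.sqrt (2*p+1) - 1)/2

def GOS (t r : ℕ) : ℕ := if r % 2 = 0 then r/2 else if (r/2) % 2 = 0 then 2*t+2 else 2*t+3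

def FOS (p : ℕ) : ℕ := GOS (blkOS p) (p - 2*(blkOS p)*(blkOS p + 1))

lemma blkOS_spec (t r : ℕ) (hr : r < 4*t+4) : blkOS (2*t*(t+1)+r) = t := by
  have h1 : (2*t+1) ≤ Nat.sqrt (2*(2*t*(t+1)+r)+1) := by
    rw [Nat.le_sqrt]; nlinarith
  have h2 : Nat.sqrt (2*(2*t*(t+1)+r)+1) < 2*t+3 := by
    rw [Nat.sqrt_lt]; nlinarith
  unfold blkOS; omega

lemma blkOS_decomp (p : ℕ) : ∃ t r, r < 4*t+4 ∧ p = 2*t*(t+1)+r := by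
  set s := Nat.sqrt (2*p+1) with hs
  have h1 : s*s ≤ 2*p+1 := by rw [hs]; have := Nat.sqrt_le' (2*p+1); simpa [pow_two] using this
  have h2 : 2*p+1 < (s+1)*(s+1) := by rw [hs]; exact Nat.lt_succ_sqrt (2*p+1)
  have hs1 : 1 ≤ s := by nlinarith
  refine ⟨(s-1)/2, p - 2*((s-1)/2)*((s-1)/2+1), ?_, ?_⟩ <;>
  · set t := (s-1)/2 with ht
    have hts : s = 2*t+1 ∨ s = 2*t+2 := by omega
    have hlow : 2*t*(t+1) ≤ p := by rcases hts with h|h <;> nlinarith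
    have hhigh : p < 2*t*(t+1) + 4*t+4 := by rcases hts with h|h <;> nlinarith
    omega

lemma FOS_eq (t r : ℕ) (hr : r < 4*t+4) : FOS (2*t*(t+1)+r) = GOS t r := by
  unfold FOS; rw [blkOS_spec t r hr]; congr 1; omega

lemma range_map_eq_ofFn {α : Type*} (n : ℕ) (g : ℕ → α) :
    List.ofFn (fun i : Fin n => g i) = (List.range n).map g := by
  rw [List.ofFn_eq_map, show (fun i : Fin n => g i) = g ∘ Fin.val from rfl,
    ← List.map_map, List.map_coe_finRange_eq_range]

lemma flatten_pairs (n : ℕ) (f g : ℕ → ℕ) :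
    (((List.range n).map (fun i => [f i, g i])).flatten) =
      (List.range (2*n)).map (fun r => if r % 2 = 0 then f (r/2) else g (r/2)) := by
  induction n with
  | zero => simp
  | succ n ih =>
    have h2 : 2*(n+1) = (2*n) + 1 + 1 := by ring
    rw [List.range_succ, h2, List.range_succ, List.range_succ]
    simp only [List.map_append, List.flatten_append, ih, List.map_cons, List.map_nil,
      List.flatten_cons, List.flatten_nil, List.append_nil, List.append_assoc]
    congr 1
    have e1 : (2*n) % 2 = 0 := by omega
    have e2 : (2*n) / 2 = n := by omega
    have e3 : (2*n+1) % 2 = 1 := by omega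
    have e4 : (2*n+1) / 2 = n := by omega
    simp [e1, e2, e3, e4]

lemma tauOS_eq (t : ℕ) :
    tauOS (2*t+4) = (List.range (4*t+4)).map (fun r => GOS t r) := by
  have h1 : tauOS (2*t+4) = ((List.range (2*t+4-2)).map
      (fun i => [i, if i % 2 = 0 then 2*t+4-2 else 2*t+4-1])).flatten := by
    unfold tauOS
    rw [← range_map_eq_ofFn]
  have e1 : 2*t+4-2 = 2*t+2 := by omega
  have e2 : 2*t+4-1 = 2*t+3 := by omega
  rw [h1, e1, e2,
    flatten_pairs (2*t+2) (fun i => i) (fun i => if i % 2 = 0 then 2*t+2 else 2*t+3)]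
  have h4 : 4*t+4 = 2*(2*t+2) := by ring
  rw [h4]
  apply List.map_congr_left
  intro r hr
  rw [List.mem_range] at hr
  unfold GOS
  rcases Nat.even_or_odd r with ⟨c,hc⟩|⟨c,hc⟩ <;> subst hc <;> simp <;> omega

lemma Ueven_rep (T : ℕ) :
    ((List.range T).map (fun t => tauOS (2*t+4))).flatten
      = (List.range (2*T*(T+1))).map FOS := by
  induction T with
  | zero => simp
  | succ T ih =>
    rw [List.range_succ, List.map_append, List.flatten_append, ih]
    have h : 2*(T+1)*(T+1+1) = 2*T*(T+1) + (4*T+4) := by ring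
    rw [h, List.range_add, List.map_append, List.map_map]
    simp only [List.map_cons, List.map_nil, List.flatten_cons, List.flatten_nil, List.append_nil]
    congr 1
    rw [tauOS_eq]
    apply List.map_congr_left
    intro r hr
    rw [List.mem_range] at hr
    exact (FOS_eq T r hr).symm

lemma take_two (l : List ℕ) (h : 2 ≤ l.length) : l.take 2 = [l[0], l[1]] := by
  rcases l with _|⟨a,_|⟨b,t⟩⟩ <;> simp at h ⊢

lemma cycWindow_two (s : List ℕ) (h2 : 2 ≤ s.length) (i : ℕ) (hi : i < s.length) :
    cycWindow s 2 i = [s[i], s[(i+1) % s.length]'(by apply Nat.mod_lt; omega)] := by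
  unfold cycWindow
  have hl : (s.rotate i).length = s.length := List.length_rotate s i
  rw [take_two _ (by omega)]
  have g0 := List.getElem_rotate s i 0 (by omega)
  have g1 := List.getElem_rotate s i 1 (by omega)
  simp only [g0, g1]
  have e0 : (0 + i) % s.length = i := by rw [Nat.zero_add]; exact Nat.mod_eq_of_lt hi
  have e1 : (1 + i) % s.length = (i + 1) % s.length := by rw [Nat.add_comm]
  simp only [e0, e1]

def WsndOS (t r : ℕ) : ℕ := if r = 4*t+3 then 0 else GOS t (r+1)

lemma win_inj (t t' r r' : ℕ) (h : r < 4*t+4) (h' : r' < 4*t'+4)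
    (h1 : GOS t r = GOS t' r') (h2 : WsndOS t r = WsndOS t' r') : t = t' ∧ r = r' := by
  simp only [WsndOS, GOS] at h1 h2
  split_ifs at h1 h2 <;> omega

lemma win_rev (t t' r r' : ℕ) (h : r < 4*t+4) (h' : r' < 4*t'+4)
    (h1 : GOS t r = WsndOS t' r') (h2 : WsndOS t r = GOS t' r') : False := by
  simp only [WsndOS, GOS] at h1 h2
  split_ifs at h1 h2 <;> omega

lemma FOS_zero : FOS 0 = 0 := by
  have := FOS_eq 0 0 (by omega)
  simpa [GOS] using this

/-- For even `k ≥ 4`, the concatenation `U_k = τ₄τ₆⋯τ_k` is a cyclic orientable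
sequence of order 2 over `{0,…,k-1}` of length `k(k-2)/2`. -/
theorem Ueven_isOrientable (k : ℕ) (hk : 4 ≤ k) (heven : Even k) :
    IsOrientableSeq k 2 (Ueven k) ∧ (Ueven k).length = k * (k - 2) / 2 := by
  obtain ⟨c, hc⟩ := heven
  set T := (k-2)/2 with hT
  have hk2 : k = 2*T+2 := by omega
  have hT1 : 1 ≤ T := by omega
  set L := 2*T*(T+1) with hL
  have hU : Ueven k = (List.range L).map FOS := by
    unfold Ueven
    rw [← hT]
    exact Ueven_rep T
  have hlen : (Ueven k).length = L := by rw [hU]; simp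
  have hL4 : 4 ≤ L := by rw [hL]; nlinarith
  have hget : ∀ p (hp : p < L), (Ueven k)[p]'(by omega) = FOS p := by
    intro p hp
    simp [hU]
  have decomp : ∀ p < L, ∃ t r, t < T ∧ r < 4*t+4 ∧ p = 2*t*(t+1)+r := by
    intro p hp
    obtain ⟨t, r, hr, rfl⟩ := blkOS_decomp p
    refine ⟨t, r, ?_, hr, rfl⟩
    by_contra hTt
    push_neg at hTt
    rw [hL] at hp
    nlinarith
  have hsnd : ∀ t r, t < T → r < 4*t+4 → FOS ((2*t*(t+1)+r+1) % L) = WsndOS t r := by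
    intro t r ht hr
    by_cases hcase : r = 4*t+3
    · subst hcase
      have he : 2*t*(t+1)+(4*t+3)+1 = 2*(t+1)*(t+1+1) := by ring
      rw [he]
      rcases Nat.lt_or_ge (t+1) T with h | h
      · have hlt : 2*(t+1)*(t+1+1) < L := by rw [hL]; nlinarith
        rw [Nat.mod_eq_of_lt hlt]
        have := FOS_eq (t+1) 0 (by omega)
        simp only [Nat.add_zero] at this
        rw [this]
        simp [GOS, WsndOS]
      · have heq : t + 1 = T := by omega
        rw [heq, ← hL, Nat.mod_self, FOS_zero]
        simp [WsndOS]
    · have hA : 2*(t+1)*(t+1+1) ≤ 2*T*(T+1) :=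
        Nat.mul_le_mul (by omega) (by omega)
      have hr2 : r ≤ 4*t+2 := by omega
      have hB : 2*t*(t+1)+r+1 < 2*(t+1)*(t+1+1) := by nlinarith
      have hlt : 2*t*(t+1)+r+1 < L := by rw [hL]; omega
      rw [Nat.mod_eq_of_lt hlt]
      have := FOS_eq t (r+1) (by omega)
      rw [show 2*t*(t+1)+r+1 = 2*t*(t+1)+(r+1) by ring, this]
      simp [WsndOS, hcase]
  have hwin : ∀ p (hp : p < L), cycWindow (Ueven k) 2 p = [FOS p, FOS ((p+1) % L)] := by
    intro p hp
    rw [cycWindow_two (Ueven k) (by omega) p (by omega)]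
    simp only [hlen]
    rw [hget p hp, hget ((p+1) % L) (Nat.mod_lt _ (by omega))]
  constructor
  · refine ⟨?_, by omega, ?_, ?_⟩
    · intro x hx
      rw [hU, List.mem_map] at hx
      obtain ⟨p, hp, rfl⟩ := hx
      rw [List.mem_range] at hp
      obtain ⟨t, r, ht, hr, rfl⟩ := decomp p hp
      rw [FOS_eq t r hr]
      unfold GOS
      split_ifs <;> omega
    · intro i hi j hj hne heq
      rw [hlen] at hi hj
      rw [hwin i hi, hwin j hj] at heq
      obtain ⟨t, r, ht, hr, rfl⟩ := decomp i hi
      obtain ⟨t', r', ht', hr', rfl⟩ := decomp j hj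
      rw [FOS_eq t r hr, FOS_eq t' r' hr', hsnd t r ht hr, hsnd t' r' ht' hr'] at heq
      simp only [List.cons.injEq, and_true] at heq
      obtain ⟨e1, e2⟩ := heq
      obtain ⟨rfl, rfl⟩ := win_inj t t' r r' hr hr' e1 e2
      exact hne rfl
    · intro i hi j hj heq
      rw [hlen] at hi hj
      rw [hwin i hi, hwin j hj] at heq
      obtain ⟨t, r, ht, hr, rfl⟩ := decomp i hi
      obtain ⟨t', r', ht', hr', rfl⟩ := decomp j hj
      rw [FOS_eq t r hr, FOS_eq t' r' hr', hsnd t r ht hr, hsnd t' r' ht' hr'] at heq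
      simp only [List.reverse_cons, List.reverse_nil, List.nil_append, List.singleton_append,
        List.cons.injEq, and_true] at heq
      obtain ⟨e1, e2⟩ := heq
      exact win_rev t t' r r' hr hr' e1 e2
  · rw [hlen]
    have h2 : 2*T+2-2 = 2*T := by omega
    have : k * (k-2) = 2 * L := by rw [hk2, hL, h2]; ring
    omega
end
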